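/- Conversely to the constant expectation property, if M is an adapted, integrable, right-continuous process such that E[M_S] = E[M_T] for every pair of bounded stopping times S ≤ T, then M is a martingale. -/

import Mathlib

open MeasureTheory
open scoped NNReal

/-
Apply the hypothesis to the stopping time `S = i` on `A` and `S = j` off `A`, where `i ≤ j` and
`A ∈ ℱ i`, against the constant time `T = j`: the contributions of `Aᶜ` cancel, leaving
`∫_A M i = ∫_A M j` for every `A ∈ ℱ i`, which characterises `M i = E[M j | ℱ i]`.
-/

theorem setIntegral_eq_of_integral_piecewise_eq {Ω E : Type*} [MeasurableSpace Ω]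
    [NormedAddCommGroup E] [NormedSpace ℝ E] {μ : Measure Ω} {s : Set Ω} [DecidablePred (· ∈ s)]
    {f g : Ω → E} (hs : MeasurableSet s) (hf : Integrable f μ) (hg : Integrable g μ)
    (h : ∫ ω, s.piecewise f g ω ∂μ = ∫ ω, g ω ∂μ) :
    ∫ ω in s, f ω ∂μ = ∫ ω in s, g ω ∂μ := by
  rw [integral_piecewise hs hf.integrableOn hg.integrableOn, ← integral_add_compl hs hg] at h
  exact add_right_cancel h

theorem martingale_of_setIntegral_eq {Ω ι E : Type*} {m : MeasurableSpace Ω} [Preorder ι]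
    [NormedAddCommGroup E] [NormedSpace ℝ E] [CompleteSpace E] {μ : Measure Ω}
    {ℱ : Filtration ι m} [SigmaFiniteFiltration μ ℱ] {f : ι → Ω → E}
    (hadp : StronglyAdapted ℱ f) (hint : ∀ i, Integrable (f i) μ)
    (hf : ∀ i j, i ≤ j → ∀ s, MeasurableSet[ℱ i] s → ∫ ω in s, f i ω ∂μ = ∫ ω in s, f j ω ∂μ) :
    Martingale f ℱ μ :=
  ⟨hadp, fun i j hij => (ae_eq_condExp_of_forall_setIntegral_eq (ℱ.le i) (hint j)
    (fun _ _ _ => (hint i).integrableOn) (fun s hs _ => hf i j hij s hs)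
    (hadp i).aestronglyMeasurable).symm⟩

theorem martingale_of_stopping_time_expectation_general
    {Ω : Type*} {m : MeasurableSpace Ω} {μ : Measure Ω} [IsProbabilityMeasure μ]
    (ℱ : Filtration ℝ≥0 m) (M : ℝ≥0 → Ω → ℝ)
    (hadapted : Adapted ℱ M) (hint : ∀ t, Integrable (M t) μ)
    (h : ∀ S T : Ω → ℝ≥0, IsStoppingTime ℱ (fun ω => (S ω : WithTop ℝ≥0)) →
        IsStoppingTime ℱ (fun ω => (T ω : WithTop ℝ≥0)) →
        (∀ ω, S ω ≤ T ω) → (∃ C : ℝ≥0, ∀ ω, T ω ≤ C) →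
        (∫ ω, M (S ω) ω ∂μ) = ∫ ω, M (T ω) ω ∂μ) :
    Martingale M ℱ μ := by
  classical
  refine martingale_of_setIntegral_eq hadapted.stronglyAdapted hint fun i j hij A hA => ?_
  refine setIntegral_eq_of_integral_piecewise_eq (ℱ.le i A hA) (hint i) (hint j) ?_
  let S : Ω → ℝ≥0 := A.piecewise (fun _ => i) fun _ => j
  have hS : IsStoppingTime ℱ (fun ω => (S ω : WithTop ℝ≥0)) := by
    convert isStoppingTime_piecewise_const hij hA using 2 with ω
    exact Set.apply_piecewise _ _ _ (fun _ => WithTop.some)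
  have hSj : ∀ ω, S ω ≤ j := Set.piecewise_le (fun _ _ => hij) fun _ _ => le_rfl
  have hMS : (fun ω => M (S ω) ω) = A.piecewise (M i) (M j) :=
    funext fun _ => Set.apply_piecewise _ _ _ fun ω t => M t ω
  rw [← hMS]
  exact h S (fun _ => j) hS (isStoppingTime_const ℱ j) hSj ⟨j, fun _ => le_rfl⟩

theorem martingale_of_stopping_time_expectation
    {Ω : Type*} {m : MeasurableSpace Ω} {μ : Measure Ω} [IsProbabilityMeasure μ]
    (ℱ : Filtration ℝ≥0 m) (M : ℝ≥0 → Ω → ℝ)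
    (hadapted : Adapted ℱ M) (hint : ∀ t, Integrable (M t) μ)
    (hrc : ∀ ω, ∀ t : ℝ≥0, ContinuousWithinAt (fun u => M u ω) (Set.Ici t) t)
    (h : ∀ S T : Ω → ℝ≥0, IsStoppingTime ℱ (fun ω => (S ω : WithTop ℝ≥0)) →
        IsStoppingTime ℱ (fun ω => (T ω : WithTop ℝ≥0)) →
        (∀ ω, S ω ≤ T ω) → (∃ C : ℝ≥0, ∀ ω, T ω ≤ C) →
        (∫ ω, M (S ω) ω ∂μ) = ∫ ω, M (T ω) ω ∂μ) :
    Martingale M ℱ μ :=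
  martingale_of_stopping_time_expectation_general ℱ M hadapted hint h
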